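/- arXiv:1211.6624 — 3 statements merged into one kernel-verified Lean document; each statement's English description precedes it below -/
import Mathlib

section
/- Let P : ℝ → Matrix be differentiable with P(t) symmetric positive definite, satisfying the Riccati equation P' = AP + PAᵀ + Q - PCᵀR⁻¹CP (with all coefficient matrices possibly time-dependent). Let δz : ℝ → ℝⁿ satisfy δz' = (A_z - PCᵀR⁻¹C_z)·δz for matrices A_z(t), C_z(t). Then d/dt (δzᵀ P⁻¹ δz) = δzᵀ P⁻¹ M P⁻¹ δz, where M = P·Ãᵀ + Ã·P + P·C̃ᵀR⁻¹C̃·P - P·C_zᵀR⁻¹C_z·P - Q with Ã = A_z - A and C̃ = C_z - C. -/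
/-!
Differentiating `δzᵀ P⁻¹ δz` with `(P⁻¹)' = -P⁻¹ P' P⁻¹` and `δz' = B δz`, where
`B = A_z - P Cᵀ R⁻¹ C_z`, gives `δzᵀ P⁻¹ (P Bᵀ + B P - P') P⁻¹ δz`. Substituting the Riccati
equation for `P'` and using the symmetry of `P` and `R⁻¹`, the middle factor becomes `M`: the cross
terms `-Cᵀ R⁻¹ C_z - C_zᵀ R⁻¹ C + Cᵀ R⁻¹ C` are exactly `C̃ᵀ R⁻¹ C̃ - C_zᵀ R⁻¹ C_z`.
-/

open Matrix
open scoped Matrix.Norms.L2Operator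

section Algebra

variable {α : Type*} [CommRing α] {m p : Type*} [Fintype m] [Fintype p]

theorem Matrix.transpose_mul_inv_add_inv_mul [DecidableEq m] {P P' B : Matrix m m α}
    (hP : IsUnit P.det) :
    Bᵀ * P⁻¹ + -(P⁻¹ * P' * P⁻¹) + P⁻¹ * B = P⁻¹ * (P * Bᵀ + B * P - P') * P⁻¹ := by
  rw [Matrix.mul_sub, Matrix.mul_add, Matrix.sub_mul, Matrix.add_mul,
    nonsing_inv_mul_cancel_left _ _ hP, ← Matrix.mul_assoc, mul_nonsing_inv_cancel_right _ _ hP]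
  abel

theorem riccati_lyapunov_eq {P A Az Q : Matrix m m α} {C Cz : Matrix p m α} {S : Matrix p p α}
    (hP : Pᵀ = P) (hS : Sᵀ = S) :
    P * (Az - P * Cᵀ * S * Cz)ᵀ + (Az - P * Cᵀ * S * Cz) * P
        - (A * P + P * Aᵀ + Q - P * Cᵀ * S * C * P) =
      P * (Az - A)ᵀ + (Az - A) * P + P * (Cz - C)ᵀ * S * (Cz - C) * P
        - P * Czᵀ * S * Cz * P - Q := by
  simp only [transpose_sub, transpose_mul, transpose_transpose, hP, hS, Matrix.mul_sub,
    Matrix.sub_mul, Matrix.mul_assoc]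
  abel

end Algebra

section Calculus

variable {𝕜 : Type*} [RCLike 𝕜] {m : Type*} [Fintype m] [DecidableEq m]

theorem HasDerivAt.dotProduct_mulVec_self {M : 𝕜 → Matrix m m 𝕜} {M' : Matrix m m 𝕜}
    {z : 𝕜 → m → 𝕜} {z' : m → 𝕜} {t : 𝕜} (hM : HasDerivAt M M' t) (hz : HasDerivAt z z' t) :
    HasDerivAt (fun s => z s ⬝ᵥ M s *ᵥ z s)
      (z' ⬝ᵥ M t *ᵥ z t + z t ⬝ᵥ M' *ᵥ z t + z t ⬝ᵥ M t *ᵥ z') t := by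
  have hz_apply (i : m) : HasDerivAt (fun s => z s i) (z' i) t := hasDerivAt_pi.1 hz i
  have hM_apply (i j : m) : HasDerivAt (fun s => M s i j) (M' i j) t :=
    (entryLinearMap 𝕜 𝕜 i j).toContinuousLinearMap.hasFDerivAt.comp_hasDerivAt t hM
  have hsum : HasDerivAt (fun s => ∑ i, ∑ j, z s i * (M s i j * z s j))
      (∑ i, ∑ j, (z' i * (M t i j * z t j) + z t i * (M' i j * z t j + M t i j * z' j))) t :=
    HasDerivAt.fun_sum fun i _ => HasDerivAt.fun_sum fun j _ =>
      (hz_apply i).mul ((hM_apply i j).mul (hz_apply j))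
  convert hsum using 1
  · simp only [dotProduct, mulVec, Finset.mul_sum]
  · simp only [dotProduct, mulVec, Finset.mul_sum, Finset.sum_add_distrib, mul_add]
    ring

theorem HasDerivAt.dotProduct_mulVec_self_of_linear {M : 𝕜 → Matrix m m 𝕜}
    {M' B : Matrix m m 𝕜} {z : 𝕜 → m → 𝕜} {t : 𝕜} (hM : HasDerivAt M M' t)
    (hz : HasDerivAt z (B *ᵥ z t) t) :
    HasDerivAt (fun s => z s ⬝ᵥ M s *ᵥ z s) (z t ⬝ᵥ (Bᵀ * M t + M' + M t * B) *ᵥ z t) t := by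
  convert hM.dotProduct_mulVec_self hz using 1
  rw [add_mulVec, add_mulVec, dotProduct_add, dotProduct_add, ← mulVec_mulVec, ← mulVec_mulVec,
    dotProduct_mulVec (z t), vecMul_transpose, dotProduct_comm (z t)]

theorem HasDerivAt.matrix_inv {P : 𝕜 → Matrix m m 𝕜} {P' : Matrix m m 𝕜} {t : 𝕜}
    (hP : HasDerivAt P P' t) (hunit : IsUnit (P t)) :
    HasDerivAt (fun s => (P s)⁻¹) (-((P t)⁻¹ * P' * (P t)⁻¹)) t := by
  have h := (hasFDerivAt_ringInverse (𝕜 := 𝕜) hunit.unit).comp_hasDerivAt t hP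
  simpa [Function.comp_def, hunit.unit_spec, ← nonsing_inv_eq_ringInverse] using h

end Calculus

theorem stmt11_general {n p : ℕ}
    (P : ℝ → Matrix (Fin n) (Fin n) ℝ)
    (A Az : ℝ → Matrix (Fin n) (Fin n) ℝ)
    (C Cz : ℝ → Matrix (Fin p) (Fin n) ℝ)
    (Q : Matrix (Fin n) (Fin n) ℝ) (R : Matrix (Fin p) (Fin p) ℝ)
    (δz : ℝ → Fin n → ℝ)
    (hR : R.PosDef)
    (hPpd : ∀ t, (P t).PosDef)
    (hPder : ∀ t, HasDerivAt P
      (A t * P t + P t * (A t)ᵀ + Q - P t * (C t)ᵀ * R⁻¹ * C t * P t) t)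
    (hδz : ∀ t, HasDerivAt δz
      ((Az t - P t * (C t)ᵀ * R⁻¹ * Cz t) *ᵥ δz t) t)
    (t : ℝ) :
    HasDerivAt (fun s => δz s ⬝ᵥ (P s)⁻¹ *ᵥ δz s)
      (δz t ⬝ᵥ ((P t)⁻¹ *
        (P t * (Az t - A t)ᵀ + (Az t - A t) * P t
          + P t * (Cz t - C t)ᵀ * R⁻¹ * (Cz t - C t) * P t
          - P t * (Cz t)ᵀ * R⁻¹ * Cz t * P t - Q) * (P t)⁻¹) *ᵥ δz t) t := by
  have hPunit : IsUnit (P t) := (hPpd t).isUnit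
  have hPsymm : (P t)ᵀ = P t := (isHermitian_iff_isSymm.1 (hPpd t).isHermitian).eq
  have hRinv_symm : (R⁻¹)ᵀ = R⁻¹ := (isHermitian_iff_isSymm.1 hR.isHermitian).inv.eq
  have h := ((hPder t).matrix_inv hPunit).dotProduct_mulVec_self_of_linear (hδz t)
  rwa [transpose_mul_inv_add_inv_mul ((isUnit_iff_isUnit_det _).1 hPunit),
    riccati_lyapunov_eq hPsymm hRinv_symm] at h

/-- derivative of the weighted quadratic form along the EKF
Riccati flow (equation (7) of the paper). -/
theorem stmt11 {n p : ℕ}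
    (P : ℝ → Matrix (Fin n) (Fin n) ℝ)
    (A Az : ℝ → Matrix (Fin n) (Fin n) ℝ)
    (C Cz : ℝ → Matrix (Fin p) (Fin n) ℝ)
    (Q : Matrix (Fin n) (Fin n) ℝ) (R : Matrix (Fin p) (Fin p) ℝ)
    (δz : ℝ → Fin n → ℝ)
    (hQ : Q.IsHermitian) (hR : R.PosDef)
    (hPpd : ∀ t, (P t).PosDef)
    (hPder : ∀ t, HasDerivAt P
      (A t * P t + P t * (A t)ᵀ + Q - P t * (C t)ᵀ * R⁻¹ * C t * P t) t)
    (hδz : ∀ t, HasDerivAt δz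
      ((Az t - P t * (C t)ᵀ * R⁻¹ * Cz t) *ᵥ δz t) t)
    (t : ℝ) :
    HasDerivAt (fun s => δz s ⬝ᵥ (P s)⁻¹ *ᵥ δz s)
      (δz t ⬝ᵥ ((P t)⁻¹ *
        (P t * (Az t - A t)ᵀ + (Az t - A t) * P t
          + P t * (Cz t - C t)ᵀ * R⁻¹ * (Cz t - C t) * P t
          - P t * (Cz t)ᵀ * R⁻¹ * Cz t * P t - Q) * (P t)⁻¹) *ᵥ δz t) t :=
  stmt11_general P A Az C Cz Q R δz hR hPpd hPder hδz t
end

section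
/- Let P be symmetric with p̲·I ≤ P ≤ p̄·I, 0 < p̲ ≤ p̄, Q symmetric with Q ≥ q̲·I, q̲ > 0, and let Ã, C̃ satisfy ‖Ã‖ ≤ κ_A·δ and ‖C̃‖ ≤ κ_C·δ for some δ ≥ 0, with R ≥ r̲·I, r̲ > 0. If (p̄²/r̲)·κ_C²·δ² + 2p̄·κ_A·δ ≤ q̲ - 2γ·p̄ for some γ ≥ 0, then P·Ãᵀ + Ã·P + P·C̃ᵀ·R⁻¹·C̃·P ≤ Q - 2γ·P. -/
/-!
Write `M = PÃᵀ + ÃP + PC̃ᵀR⁻¹C̃P`. A symmetric matrix lies below its spectral norm times the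
identity, so it suffices to bound `‖M‖ ≤ 2‖P‖‖Ã‖ + ‖P‖²‖C̃‖²‖R⁻¹‖`. The continuous functional
calculus reads `‖P‖ ≤ p̄` off `σ(P) ⊆ [0, p̄]` and `‖R⁻¹‖ ≤ 1/r̲` off `σ(R) ⊆ [r̲, ∞)`, and the
scalar hypothesis turns the bound into `M ≤ (q̲ - 2γp̄)·I ≤ Q - 2γP`.
-/

open Matrix
open scoped Matrix.Norms.L2Operator Ring MatrixOrder

section IsometricCFC

variable {A : Type*} [NormedRing A] [StarRing A] [NormedAlgebra ℝ A]
  [IsometricContinuousFunctionalCalculus ℝ A IsSelfAdjoint]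
  [PartialOrder A] [StarOrderedRing A]

lemma IsSelfAdjoint.le_algebraMap_norm {a : A} (ha : IsSelfAdjoint a) :
    a ≤ algebraMap ℝ A ‖a‖ :=
  le_algebraMap_of_spectrum_le fun x hx ↦
    (le_abs_self x).trans (IsometricContinuousFunctionalCalculus.norm_spectrum_le a hx)

variable [NonnegSpectrumClass ℝ A]

lemma norm_le_of_nonneg_of_le_algebraMap {a : A} {c : ℝ} (hc : 0 ≤ c) (ha₀ : 0 ≤ a)
    (ha : a ≤ algebraMap ℝ A c) : ‖a‖ ≤ c := by
  have hsa : IsSelfAdjoint a := .of_nonneg ha₀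
  rw [← cfc_id' ℝ a]
  refine norm_cfc_le hc fun x hx ↦ abs_le.mpr ⟨?_, (le_algebraMap_iff_spectrum_le hsa).mp ha x hx⟩
  linarith [spectrum_nonneg_of_nonneg ha₀ hx]

lemma norm_ringInverse_le_of_algebraMap_le [StarModule ℝ A] {a : A} {r : ℝ} (hr : 0 < r)
    (ha : algebraMap ℝ A r ≤ a) : ‖a⁻¹ʳ‖ ≤ r⁻¹ := by
  have hsa : IsSelfAdjoint a := .of_ge ha (.algebraMap A (.all r))
  have hspec := (algebraMap_le_iff_le_spectrum hsa).mp ha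
  have hpos : ∀ x ∈ spectrum ℝ a, 0 < x := fun x hx ↦ hr.trans_le (hspec x hx)
  rw [← cfc_id ℝ a, ← cfc_inv id a fun x hx ↦ (hpos x hx).ne']
  refine norm_cfc_le (inv_nonneg.mpr hr.le) fun x hx ↦ ?_
  rw [norm_inv, id, Real.norm_of_nonneg (hpos x hx).le]
  exact inv_anti₀ hr (hspec x hx)

end IsometricCFC

namespace Matrix

variable {m n : Type*} [Fintype m] [Fintype n]

lemma IsHermitian.mul_transpose_add_mul {P : Matrix n n ℝ} (hP : P.IsHermitian)
    (A : Matrix n n ℝ) : (P * Aᵀ + A * P).IsHermitian := by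
  have hPt : Pᵀ = P := by rw [← conjTranspose_eq_transpose_of_trivial, hP.eq]
  rw [IsHermitian, conjTranspose_eq_transpose_of_trivial, transpose_add, transpose_mul,
    transpose_mul, transpose_transpose, hPt, add_comm]

lemma IsHermitian.mul_transpose_mul_mul_mul {P : Matrix n n ℝ} {S : Matrix m m ℝ}
    (hP : P.IsHermitian) (hS : S.IsHermitian) (C : Matrix m n ℝ) :
    (P * Cᵀ * S * C * P).IsHermitian := by
  have h := isHermitian_conjTranspose_mul_mul (C * P) hS
  rwa [conjTranspose_mul, hP.eq, conjTranspose_eq_transpose_of_trivial, ← Matrix.mul_assoc] at h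

variable [DecidableEq m] [DecidableEq n]

lemma l2_opNorm_transpose (A : Matrix m n ℝ) : ‖Aᵀ‖ = ‖A‖ := by
  rw [← conjTranspose_eq_transpose_of_trivial, l2_opNorm_conjTranspose]

lemma l2_opNorm_mul_transpose_add_mul_le (P A : Matrix n n ℝ) :
    ‖P * Aᵀ + A * P‖ ≤ 2 * ‖P‖ * ‖A‖ :=
  calc ‖P * Aᵀ + A * P‖ ≤ ‖P‖ * ‖Aᵀ‖ + ‖A‖ * ‖P‖ :=
        (norm_add_le _ _).trans (add_le_add (l2_opNorm_mul _ _) (l2_opNorm_mul _ _))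
    _ = 2 * ‖P‖ * ‖A‖ := by rw [l2_opNorm_transpose]; ring

lemma l2_opNorm_mul_transpose_mul_mul_mul_le (P : Matrix n n ℝ) (C : Matrix m n ℝ)
    (S : Matrix m m ℝ) : ‖P * Cᵀ * S * C * P‖ ≤ ‖P‖ ^ 2 * ‖C‖ ^ 2 * ‖S‖ :=
  calc ‖P * Cᵀ * S * C * P‖ ≤ ‖P‖ * ‖Cᵀ‖ * ‖S‖ * ‖C‖ * ‖P‖ := by
        refine (l2_opNorm_mul _ _).trans (mul_le_mul_of_nonneg_right ?_ (norm_nonneg _))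
        refine (l2_opNorm_mul _ _).trans (mul_le_mul_of_nonneg_right ?_ (norm_nonneg _))
        refine (l2_opNorm_mul _ _).trans (mul_le_mul_of_nonneg_right ?_ (norm_nonneg _))
        exact l2_opNorm_mul _ _
    _ = ‖P‖ ^ 2 * ‖C‖ ^ 2 * ‖S‖ := by rw [l2_opNorm_transpose]; ring

end Matrix

theorem stmt14_general {n p : ℕ} (P Q At : Matrix (Fin n) (Fin n) ℝ)
    (Ct : Matrix (Fin p) (Fin n) ℝ) (R : Matrix (Fin p) (Fin p) ℝ)
    (plow pbar qlow rlow κA κC δ γ : ℝ)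
    (hplow : 0 < plow) (hle : plow ≤ pbar) (hrlow : 0 < rlow)
    (hγ : 0 ≤ γ)
    (hPlow : (P - plow • (1 : Matrix (Fin n) (Fin n) ℝ)).PosSemidef)
    (hPup : (pbar • (1 : Matrix (Fin n) (Fin n) ℝ) - P).PosSemidef)
    (hQlow : (Q - qlow • (1 : Matrix (Fin n) (Fin n) ℝ)).PosSemidef)
    (hA : ‖At‖ ≤ κA * δ) (hC : ‖Ct‖ ≤ κC * δ)
    (hRlow : (R - rlow • (1 : Matrix (Fin p) (Fin p) ℝ)).PosSemidef)
    (hkey : (pbar ^ 2 / rlow) * κC ^ 2 * δ ^ 2 + 2 * pbar * κA * δ ≤ qlow - 2 * γ * pbar) :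
    (Q - (2 * γ) • P - (P * Atᵀ + At * P + P * Ctᵀ * R⁻¹ * Ct * P)).PosSemidef := by
  have hpbar : 0 ≤ pbar := hplow.le.trans hle
  have hP₀ : 0 ≤ P := (smul_nonneg hplow.le zero_le_one).trans (le_iff.mpr hPlow)
  have hP : P.IsHermitian := (nonneg_iff_posSemidef.mp hP₀).isHermitian
  have hPnorm : ‖P‖ ≤ pbar := norm_le_of_nonneg_of_le_algebraMap hpbar hP₀
    (by rwa [Algebra.algebraMap_eq_smul_one, le_iff])
  have hRlow' : algebraMap ℝ _ rlow ≤ R := by rwa [Algebra.algebraMap_eq_smul_one, le_iff]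
  have hR : R.IsHermitian := IsSelfAdjoint.of_ge hRlow' (.algebraMap _ (.all rlow))
  have hRinv : ‖R⁻¹‖ ≤ rlow⁻¹ := by
    rw [nonsing_inv_eq_ringInverse]
    exact norm_ringInverse_le_of_algebraMap_le hrlow hRlow'
  set M := P * Atᵀ + At * P + P * Ctᵀ * R⁻¹ * Ct * P
  have hM : M.IsHermitian :=
    (hP.mul_transpose_add_mul At).add (hP.mul_transpose_mul_mul_mul hR.inv Ct)
  have hMnorm : ‖M‖ ≤ qlow - 2 * γ * pbar :=
    calc ‖M‖ ≤ 2 * ‖P‖ * ‖At‖ + ‖P‖ ^ 2 * ‖Ct‖ ^ 2 * ‖R⁻¹‖ :=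
          (norm_add_le _ _).trans (add_le_add (l2_opNorm_mul_transpose_add_mul_le P At)
            (l2_opNorm_mul_transpose_mul_mul_mul_le P Ct R⁻¹))
      _ ≤ 2 * pbar * (κA * δ) + pbar ^ 2 * (κC * δ) ^ 2 * rlow⁻¹ := by gcongr
      _ ≤ qlow - 2 * γ * pbar := by
          convert hkey using 1; field_simp; ring
  rw [← le_iff]
  calc M ≤ algebraMap ℝ _ ‖M‖ := hM.isSelfAdjoint.le_algebraMap_norm
    _ ≤ algebraMap ℝ _ (qlow - 2 * γ * pbar) := algebraMap_mono _ hMnorm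
    _ = qlow • 1 - (2 * γ) • pbar • 1 := by rw [Algebra.algebraMap_eq_smul_one]; module
    _ ≤ Q - (2 * γ) • P := sub_le_sub (le_iff.mpr hQlow)
          (smul_le_smul_of_nonneg_left (le_iff.mpr hPup) (by positivity))

/-- quantitative contraction region estimate (core of Cor. 2):
the norm bounds on `At`, `Ct` plus the scalar inequality give
`P Atᵀ + At P + P Ctᵀ R⁻¹ Ct P ≤ Q - 2γ P`. -/
theorem stmt14 {n p : ℕ} (P Q At : Matrix (Fin n) (Fin n) ℝ)
    (Ct : Matrix (Fin p) (Fin n) ℝ) (R : Matrix (Fin p) (Fin p) ℝ)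
    (plow pbar qlow rlow κA κC δ γ : ℝ)
    (hplow : 0 < plow) (hle : plow ≤ pbar) (hqlow : 0 < qlow) (hrlow : 0 < rlow)
    (hδ : 0 ≤ δ) (hγ : 0 ≤ γ)
    (hPsym : P.IsHermitian) (hQsym : Q.IsHermitian)
    (hPlow : (P - plow • (1 : Matrix (Fin n) (Fin n) ℝ)).PosSemidef)
    (hPup : (pbar • (1 : Matrix (Fin n) (Fin n) ℝ) - P).PosSemidef)
    (hQlow : (Q - qlow • (1 : Matrix (Fin n) (Fin n) ℝ)).PosSemidef)
    (hA : ‖At‖ ≤ κA * δ) (hC : ‖Ct‖ ≤ κC * δ)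
    (hR : R.PosDef)
    (hRlow : (R - rlow • (1 : Matrix (Fin p) (Fin p) ℝ)).PosSemidef)
    (hkey : (pbar ^ 2 / rlow) * κC ^ 2 * δ ^ 2 + 2 * pbar * κA * δ ≤ qlow - 2 * γ * pbar) :
    (Q - (2 * γ) • P - (P * Atᵀ + At * P + P * Ctᵀ * R⁻¹ * Ct * P)).PosSemidef :=
  stmt14_general P Q At Ct R plow pbar qlow rlow κA κC δ γ hplow hle hrlow hγ hPlow hPup hQlow hA hC
    hRlow hkey
end

section
/- Let Q, P, Ã, C̃, C, R be as in the EKF contraction inequality, and suppose P·Ãᵀ + Ã·P + P·C̃ᵀR⁻¹C̃·P ≤ Q - 2γ·P + P·CᵀR⁻¹C·P holds for some γ ≥ 0. If the Riccati equation is modified by adding 2N for a symmetric positive definite matrix N with smallest eigenvalue n̲ and P ≤ p̄·I still holds, then P·Ãᵀ + Ã·P + P·C̃ᵀR⁻¹C̃·P ≤ (Q + 2N) - 2(γ + n̲/p̄)·P + P·CᵀR⁻¹C·P. -/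
/-!
In the Loewner order `N ≥ n̲ I ≥ (n̲ / p̄) P`, because `P ≤ p̄ I`. Hence the extra term `2N` on the
right-hand side dominates the extra decay `2 (n̲ / p̄) P`, and adding the nonnegative matrix
`2 (N - (n̲ / p̄) P)` to the assumed inequality gives the claimed one.
-/

open Matrix
open scoped MatrixOrder ComplexOrder

namespace Matrix

variable {ι 𝕜 : Type*} [RCLike 𝕜]

theorem smul_le_smul_of_nonneg {A B : Matrix ι ι 𝕜} {c : ℝ} (hc : 0 ≤ c) (h : A ≤ B) :
    c • A ≤ c • B := by
  rw [le_iff, ← smul_sub]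
  exact (le_iff.mp h).smul hc

theorem smul_le_of_smul_one_le_of_le_smul_one [DecidableEq ι] {N P : Matrix ι ι 𝕜} {a b : ℝ}
    (ha : 0 ≤ a) (hb : 0 < b) (hN : a • (1 : Matrix ι ι 𝕜) ≤ N) (hP : P ≤ b • 1) :
    (a / b) • P ≤ N :=
  calc (a / b) • P ≤ (a / b) • b • (1 : Matrix ι ι 𝕜) := smul_le_smul_of_nonneg (by positivity) hP
    _ = a • 1 := by rw [smul_smul, div_mul_cancel₀ a hb.ne']
    _ ≤ N := hN

end Matrix

theorem stmt17_general {n p : ℕ} (Q P N At : Matrix (Fin n) (Fin n) ℝ)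
    (Ct C : Matrix (Fin p) (Fin n) ℝ) (R : Matrix (Fin p) (Fin p) ℝ)
    (γ nlow pbar : ℝ) (hnlow : 0 < nlow) (hpbar : 0 < pbar)
    (hNlow : (N - nlow • (1 : Matrix (Fin n) (Fin n) ℝ)).PosSemidef)
    (hPup : (pbar • (1 : Matrix (Fin n) (Fin n) ℝ) - P).PosSemidef)
    (hineq : (Q - (2 * γ) • P + P * Cᵀ * R⁻¹ * C * P
      - (P * Atᵀ + At * P + P * Ctᵀ * R⁻¹ * Ct * P)).PosSemidef) :
    ((Q + (2 : ℝ) • N) - (2 * (γ + nlow / pbar)) • P + P * Cᵀ * R⁻¹ * C * P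
      - (P * Atᵀ + At * P + P * Ctᵀ * R⁻¹ * Ct * P)).PosSemidef := by
  have hgain : (nlow / pbar) • P ≤ N :=
    smul_le_of_smul_one_le_of_le_smul_one hnlow.le hpbar hNlow hPup
  have hslack : 0 ≤ (2 : ℝ) • (N - (nlow / pbar) • P) := by
    simpa using smul_le_smul_of_nonneg zero_le_two (sub_nonneg.mpr hgain)
  show P * Atᵀ + At * P + P * Ctᵀ * R⁻¹ * Ct * P
    ≤ (Q + (2 : ℝ) • N) - (2 * (γ + nlow / pbar)) • P + P * Cᵀ * R⁻¹ * C * P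
  calc P * Atᵀ + At * P + P * Ctᵀ * R⁻¹ * Ct * P
      ≤ Q - (2 * γ) • P + P * Cᵀ * R⁻¹ * C * P := hineq
    _ ≤ Q - (2 * γ) • P + P * Cᵀ * R⁻¹ * C * P + (2 : ℝ) • (N - (nlow / pbar) • P) :=
      le_add_of_nonneg_right hslack
    _ = (Q + (2 : ℝ) • N) - (2 * (γ + nlow / pbar)) • P + P * Cᵀ * R⁻¹ * C * P := by module

/-- adding `2N` to the Riccati equation increases the guaranteed
contraction rate by `nlow/pbar` (generalized Reif modification). -/
theorem stmt17 {n p : ℕ} (Q P N At : Matrix (Fin n) (Fin n) ℝ)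
    (Ct C : Matrix (Fin p) (Fin n) ℝ) (R : Matrix (Fin p) (Fin p) ℝ)
    (γ nlow pbar : ℝ) (hγ : 0 ≤ γ) (hnlow : 0 < nlow) (hpbar : 0 < pbar)
    (hQ : Q.PosDef) (hNsym : N.IsHermitian) (hNpd : N.PosDef)
    (hNlow : (N - nlow • (1 : Matrix (Fin n) (Fin n) ℝ)).PosSemidef)
    (hP : P.PosDef)
    (hPup : (pbar • (1 : Matrix (Fin n) (Fin n) ℝ) - P).PosSemidef)
    (hR : R.PosDef)
    (hineq : (Q - (2 * γ) • P + P * Cᵀ * R⁻¹ * C * P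
      - (P * Atᵀ + At * P + P * Ctᵀ * R⁻¹ * Ct * P)).PosSemidef) :
    ((Q + (2 : ℝ) • N) - (2 * (γ + nlow / pbar)) • P + P * Cᵀ * R⁻¹ * C * P
      - (P * Atᵀ + At * P + P * Ctᵀ * R⁻¹ * Ct * P)).PosSemidef :=
  stmt17_general Q P N At Ct C R γ nlow pbar hnlow hpbar hNlow hPup hineq
end
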